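/- Let C be a category, let F : Cᵒᵖ ⥤ Cat be a functor (a strict presheaf of categories, so that pullback functors f* := F(f) satisfy (g ∘ f)* = f* ∘ g* and (id)* = id on the nose), and let X be a simplicial object in C. Define the category of full descent data on X: objects are families (E_k)_{k≥0} with E_k an object of F(X_k), together with isomorphisms X(θ)*(E_k) ≅ E_m in F(X_m) for every morphism θ : [k] → [m] of the simplex category Δ (where X(θ) : X_m → X_k is the corresponding structure map), compatible with composition in Δ and equal to the identity for identity maps; morphisms are families of morphisms E_k → E'_k commuting with these isomorphisms. Then the restriction functor, sending a full descent datum to the pair (E₀, φ) consisting of E₀ and the induced isomorphism φ : ∂₀*E₀ ≅ ∂₁*E₀ over X₁, is an equivalence of categories onto the category of descent data on the 2-truncation of X, i.e. pairs (E, φ) with E an object of F(X₀) and φ : ∂₀*E ≅ ∂₁*E an isomorphism in F(X₁) satisfying the cocycle condition over X₂. -/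

import Mathlib

open CategoryTheory Simplicial Opposite

namespace Stmt5

variable {C : Type*} [Category C] (F : Cᵒᵖ ⥤ Cat) (X : CategoryTheory.SimplicialObject C)

/-- By strict functoriality, pulling back along `f` and then `g` agrees with pulling back
along the composite `f ≫ g`, as an equality of objects. -/
lemma pb_comp_obj {a b c : C} (f : a ⟶ b) (g : b ⟶ c) (E : F.obj (op c)) :
    (F.map f.op).toFunctor.obj ((F.map g.op).toFunctor.obj E) = (F.map (f ≫ g).op).toFunctor.obj E := by
  rw [op_comp, F.map_comp]; rfl

lemma pb_id_obj {a : C} (E : F.obj (op a)) : (F.map (𝟙 a).op).toFunctor.obj E = E := by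
  rw [op_id, F.map_id]; rfl

/-- Pullback along the structure map of an identity of the simplex category is the
identity, on objects. -/
lemma pbX_id_obj (k : SimplexCategory) (o : F.obj (op (X.obj (op k)))) :
    (F.map (X.map (𝟙 k).op).op).toFunctor.obj o = o := by
  rw [op_id, X.map_id, pb_id_obj]

/-- Pullback along the structure map of a composite in the simplex category agrees,
on objects, with the composite of the pullbacks. -/
lemma pbX_comp_obj {k m l : SimplexCategory} (θ : k ⟶ m) (θ' : m ⟶ l)
    (o : F.obj (op (X.obj (op k)))) :
    (F.map (X.map (θ ≫ θ').op).op).toFunctor.obj o =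
      (F.map (X.map θ'.op).op).toFunctor.obj ((F.map (X.map θ.op).op).toFunctor.obj o) := by
  rw [op_comp, X.map_comp, ← pb_comp_obj]

end Stmt5

namespace Stmt5

/-- A full descent datum on the simplicial object `X` relative to the strict presheaf of
categories `F`:  a family of objects `E_k` of `F(X_k)`, together with isomorphisms
`X(θ)*(E_k) ≅ E_m` for every `θ : [k] ⟶ [m]` in the simplex category, compatible with
composition and identities (the pullbacks along equal composites being identified via
`eqToHom`, coming from the strict functoriality equalities). -/
structure FullDescentDatum {C : Type*} [Category C] (F : Cᵒᵖ ⥤ Cat)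
    (X : CategoryTheory.SimplicialObject C) where
  obj : ∀ k : SimplexCategory, F.obj (op (X.obj (op k)))
  iso : ∀ {k m : SimplexCategory} (θ : k ⟶ m),
    (F.map (X.map θ.op).op).toFunctor.obj (obj k) ≅ obj m
  iso_id : ∀ k : SimplexCategory, (iso (𝟙 k)).hom = eqToHom (pbX_id_obj F X k (obj k))
  iso_comp : ∀ {k m l : SimplexCategory} (θ : k ⟶ m) (θ' : m ⟶ l),
    (iso (θ ≫ θ')).hom =
      eqToHom (pbX_comp_obj F X θ θ' (obj k)) ≫
        (F.map (X.map θ'.op).op).toFunctor.map (iso θ).hom ≫ (iso θ').hom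

variable {C : Type*} [Category C] (F : Cᵒᵖ ⥤ Cat) (X : CategoryTheory.SimplicialObject C)

/-- A morphism of full descent data: a family of morphisms `E_k ⟶ E'_k` commuting with
the descent isomorphisms. -/
structure FullHom (A B : FullDescentDatum F X) where
  app : ∀ k : SimplexCategory, A.obj k ⟶ B.obj k
  compat : ∀ {k m : SimplexCategory} (θ : k ⟶ m),
    (F.map (X.map θ.op).op).toFunctor.map (app k) ≫ (B.iso θ).hom = (A.iso θ).hom ≫ app m

theorem FullHom.ext' {A B : FullDescentDatum F X} (f g : FullHom F X A B)
    (h : f.app = g.app) : f = g := by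
  cases f; cases g; cases h; rfl

instance : Category (FullDescentDatum F X) where
  Hom A B := FullHom F X A B
  id A :=
    { app := fun k => 𝟙 (A.obj k)
      compat := fun θ => by simp }
  comp {A B D} f g :=
    { app := fun k => f.app k ≫ g.app k
      compat := fun θ => by
        rw [Functor.map_comp, Category.assoc, g.compat, ← Category.assoc, f.compat,
          Category.assoc] }
  id_comp f := FullHom.ext' F X _ _ (funext fun k => Category.id_comp _)
  comp_id f := FullHom.ext' F X _ _ (funext fun k => Category.comp_id _)
  assoc f g h := FullHom.ext' F X _ _ (funext fun k => Category.assoc _ _ _)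

/-- Simplicial identities for the low-dimensional face maps, on objects after pullback;
these provide the canonical identifications used in the cocycle condition. -/
lemma face₁ : X.δ (1 : Fin 3) ≫ X.δ (0 : Fin 2) = X.δ (0 : Fin 3) ≫ X.δ (0 : Fin 2) := by
  simpa using CategoryTheory.SimplicialObject.δ_comp_δ (X := X)
    (i := (0 : Fin 2)) (j := (0 : Fin 2)) le_rfl

lemma face₂ : X.δ (0 : Fin 3) ≫ X.δ (1 : Fin 2) = X.δ (2 : Fin 3) ≫ X.δ (0 : Fin 2) := by
  simpa using (CategoryTheory.SimplicialObject.δ_comp_δ (X := X)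
    (i := (0 : Fin 2)) (j := (1 : Fin 2)) (by decide)).symm

lemma face₃ : X.δ (2 : Fin 3) ≫ X.δ (1 : Fin 2) = X.δ (1 : Fin 3) ≫ X.δ (1 : Fin 2) := by
  simpa using CategoryTheory.SimplicialObject.δ_comp_δ (X := X)
    (i := (1 : Fin 2)) (j := (1 : Fin 2)) le_rfl

variable (E : F.obj (op (X _⦋0⦌)))

lemma eqA : (F.map (X.δ (1 : Fin 3)).op).toFunctor.obj ((F.map (X.δ (0 : Fin 2)).op).toFunctor.obj E) =
    (F.map (X.δ (0 : Fin 3)).op).toFunctor.obj ((F.map (X.δ (0 : Fin 2)).op).toFunctor.obj E) := by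
  rw [pb_comp_obj, pb_comp_obj, face₁]

lemma eqB : (F.map (X.δ (0 : Fin 3)).op).toFunctor.obj ((F.map (X.δ (1 : Fin 2)).op).toFunctor.obj E) =
    (F.map (X.δ (2 : Fin 3)).op).toFunctor.obj ((F.map (X.δ (0 : Fin 2)).op).toFunctor.obj E) := by
  rw [pb_comp_obj, pb_comp_obj, face₂]

lemma eqC : (F.map (X.δ (2 : Fin 3)).op).toFunctor.obj ((F.map (X.δ (1 : Fin 2)).op).toFunctor.obj E) =
    (F.map (X.δ (1 : Fin 3)).op).toFunctor.obj ((F.map (X.δ (1 : Fin 2)).op).toFunctor.obj E) := by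
  rw [pb_comp_obj, pb_comp_obj, face₃]

end Stmt5

namespace Stmt5

/-- A descent datum on the 2-truncation of the simplicial object `X` relative to the
strict presheaf of categories `F`: an object `E` of `F(X₀)` together with an isomorphism
`φ : ∂₀*E ≅ ∂₁*E` in `F(X₁)` satisfying the cocycle condition over `X₂`, the pullbacks
along equal composites of face maps being identified via `eqToHom`. -/
structure DescentDatum {C : Type*} [Category C] (F : Cᵒᵖ ⥤ Cat)
    (X : CategoryTheory.SimplicialObject C) where
  E : F.obj (op (X _⦋0⦌))
  φ : (F.map (X.δ (0 : Fin 2)).op).toFunctor.obj E ≅ (F.map (X.δ (1 : Fin 2)).op).toFunctor.obj E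
  cocycle : (F.map (X.δ (1 : Fin 3)).op).toFunctor.map φ.hom =
    eqToHom (eqA F X E) ≫ (F.map (X.δ (0 : Fin 3)).op).toFunctor.map φ.hom ≫
      eqToHom (eqB F X E) ≫ (F.map (X.δ (2 : Fin 3)).op).toFunctor.map φ.hom ≫
      eqToHom (eqC F X E)

variable {C : Type*} [Category C] (F : Cᵒᵖ ⥤ Cat) (X : CategoryTheory.SimplicialObject C)

/-- A morphism of truncated descent data: a morphism `E ⟶ E'` commuting with `φ`. -/
structure DescHom (P Q : DescentDatum F X) where
  g : P.E ⟶ Q.E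
  compat : (F.map (X.δ (0 : Fin 2)).op).toFunctor.map g ≫ Q.φ.hom =
    P.φ.hom ≫ (F.map (X.δ (1 : Fin 2)).op).toFunctor.map g

theorem DescHom.ext' {P Q : DescentDatum F X} (f g : DescHom F X P Q)
    (h : f.g = g.g) : f = g := by
  cases f; cases g; cases h; rfl

instance : Category (DescentDatum F X) where
  Hom P Q := DescHom F X P Q
  id P :=
    { g := 𝟙 P.E
      compat := by simp }
  comp {P Q R} f g :=
    { g := f.g ≫ g.g
      compat := by
        rw [Functor.map_comp, Category.assoc, g.compat, ← Category.assoc, f.compat,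
          Category.assoc, ← Functor.map_comp] }
  id_comp f := DescHom.ext' F X _ _ (Category.id_comp _)
  comp_id f := DescHom.ext' F X _ _ (Category.comp_id _)
  assoc f g h := DescHom.ext' F X _ _ (Category.assoc _ _ _)


/-!
A full descent datum is determined by its level-zero part. Each `E_k` is identified, through
`iso` along the vertex `0 : ⦋0⦌ ⟶ ⦋k⦌`, with a pullback of `E₀`, and each component `u_k` of a
morphism is the transport of `u₀` along that vertex. A morphism `u₀` compatible with `φ` has the
same transport along the two ends of every edge, hence along all vertices, so its transports form a
morphism of full descent data: restriction is full and faithful.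

Conversely, `(E, φ)` extends to `E_k := v₀*E`, where the pullbacks of `E` along two vertices
`i ≤ j` of `⦋m⦌` are glued by `φ` pulled back along the edge `i → j`. The cocycle condition, pulled
back along the triangle `i ≤ j ≤ k`, says that these gluings compose; pulled back to `⦋0⦌`, it makes
the pullback of `φ` along the degeneracy an idempotent isomorphism, hence the identity, so the
gluing along a degenerate edge is trivial. These are the composition and identity axioms.
-/

lemma eq_eqToHom_of_eq_comp_self {D : Type*} [Category D] {a b : D} {u : a ⟶ b} [IsIso u]
    (h₁ : a = a) (h₂ : b = a) (h₃ : b = b)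
    (hu : u = eqToHom h₁ ≫ u ≫ eqToHom h₂ ≫ u ≫ eqToHom h₃) : u = eqToHom h₂.symm := by
  simp only [eqToHom_refl, Category.id_comp, Category.comp_id] at hu
  have h : eqToHom h₂ ≫ u = 𝟙 b := (cancel_epi u).1 (by rw [Category.comp_id]; exact hu.symm)
  rw [← cancel_epi (eqToHom h₂), h, eqToHom_trans, eqToHom_refl]

section Simplices

open SimplexCategory

def edge {m : SimplexCategory} (i j : Fin (m.len + 1)) (h : i ≤ j) : ⦋1⦌ ⟶ m :=
  mkOfLe (n := m.len) i j h

def triangle {m : SimplexCategory} (i j k : Fin (m.len + 1)) (hij : i ≤ j) (hjk : j ≤ k) :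
    ⦋2⦌ ⟶ m :=
  mkOfLeComp (n := m.len) i j k hij hjk

variable {m : SimplexCategory}

lemma δ_zero_comp_edge (i j : Fin (m.len + 1)) (h : i ≤ j) : δ 0 ≫ edge i j h = const ⦋0⦌ m j :=
  eq_const_of_zero _

lemma δ_one_comp_edge (i j : Fin (m.len + 1)) (h : i ≤ j) : δ 1 ≫ edge i j h = const ⦋0⦌ m i :=
  eq_const_of_zero _

lemma edge_self (i : Fin (m.len + 1)) : edge i i le_rfl = σ 0 ≫ const ⦋0⦌ m i :=
  Hom.ext_one_left _ _

lemma edge_comp {l : SimplexCategory} (i j : Fin (m.len + 1)) (h : i ≤ j) (θ : m ⟶ l) :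
    edge i j h ≫ θ = edge (θ.toOrderHom i) (θ.toOrderHom j) (θ.toOrderHom.monotone h) :=
  Hom.ext_one_left _ _

lemma edge_zero_one : edge (0 : Fin 2) 1 zero_le_one = 𝟙 ⦋1⦌ :=
  Hom.ext_one_left _ _

variable (i j k : Fin (m.len + 1)) (hij : i ≤ j) (hjk : j ≤ k)

lemma δ_zero_comp_triangle : δ 0 ≫ triangle i j k hij hjk = edge j k hjk :=
  Hom.ext_one_left _ _

lemma δ_one_comp_triangle : δ 1 ≫ triangle i j k hij hjk = edge i k (hij.trans hjk) :=
  Hom.ext_one_left _ _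

lemma δ_two_comp_triangle : δ 2 ≫ triangle i j k hij hjk = edge i j hij :=
  Hom.ext_one_left _ _

end Simplices

section Pullback

abbrev pull {k m : SimplexCategory} (θ : k ⟶ m) :
    F.obj (op (X.obj (op k))) ⥤ F.obj (op (X.obj (op m))) :=
  (F.map (X.map θ.op).op).toFunctor

lemma pull_comp {k m l : SimplexCategory} (θ : k ⟶ m) (θ' : m ⟶ l) :
    pull F X (θ ≫ θ') = pull F X θ ⋙ pull F X θ' := by
  simp only [pull, op_comp, X.map_comp, F.map_comp]; rfl

lemma pull_id (k : SimplexCategory) : pull F X (𝟙 k) = 𝟭 _ := by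
  simp only [pull, op_id, X.map_id, F.map_id]; rfl

lemma pull_obj_pull_obj_eq {k m m' l : SimplexCategory} {θ₁ : k ⟶ m} {θ₂ : m ⟶ l}
    {θ₁' : k ⟶ m'} {θ₂' : m' ⟶ l} (w : θ₁ ≫ θ₂ = θ₁' ≫ θ₂') (E : F.obj (op (X.obj (op k)))) :
    (pull F X θ₂).obj ((pull F X θ₁).obj E) = (pull F X θ₂').obj ((pull F X θ₁').obj E) := by
  rw [← pbX_comp_obj, w, pbX_comp_obj]

lemma pull_const_zero_obj (E : F.obj (op (X _⦋0⦌))) :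
    (pull F X (SimplexCategory.const ⦋0⦌ ⦋0⦌ 0)).obj E = E := by
  rw [SimplexCategory.const_eq_id]
  exact pbX_id_obj F X _ E

variable {F X}

lemma pull_map_map {k m l : SimplexCategory} {θ : k ⟶ m} {θ' : m ⟶ l} {ρ : k ⟶ l}
    (w : θ ≫ θ' = ρ) {A B : F.obj (op (X.obj (op k)))} (u : A ⟶ B) :
    (pull F X θ').map ((pull F X θ).map u) =
      eqToHom (by rw [← w, pbX_comp_obj]) ≫ (pull F X ρ).map u ≫
        eqToHom (by rw [← w, pbX_comp_obj]) := by
  subst w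
  simp [Functor.congr_hom (pull_comp F X θ θ') u]

lemma pull_comp_map {k m l : SimplexCategory} (θ : k ⟶ m) (θ' : m ⟶ l)
    {A B : F.obj (op (X.obj (op k)))} (u : A ⟶ B) :
    (pull F X (θ ≫ θ')).map u =
      eqToHom (pbX_comp_obj F X θ θ' A) ≫ (pull F X θ').map ((pull F X θ).map u) ≫
        eqToHom (pbX_comp_obj F X θ θ' B).symm := by
  simp [pull_map_map rfl]

lemma pull_map_congr {k m : SimplexCategory} {θ θ' : k ⟶ m} (w : θ = θ')
    {A B : F.obj (op (X.obj (op k)))} (u : A ⟶ B) :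
    (pull F X θ).map u = eqToHom (by rw [w]) ≫ (pull F X θ').map u ≫ eqToHom (by rw [w]) := by
  subst w; simp

lemma pull_id_map {k : SimplexCategory} {A B : F.obj (op (X.obj (op k)))} (u : A ⟶ B) :
    (pull F X (𝟙 k)).map u =
      eqToHom (pbX_id_obj F X k A) ≫ u ≫ eqToHom (pbX_id_obj F X k B).symm :=
  Functor.congr_hom (pull_id F X k) u

end Pullback

namespace FullDescentDatum

open SimplexCategory

variable {F X} (A : FullDescentDatum F X)

lemma iso_hom_congr {k m : SimplexCategory} {θ θ' : k ⟶ m} (w : θ = θ') :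
    (A.iso θ).hom = eqToHom (by rw [w]) ≫ (A.iso θ').hom := by
  subst w; simp

lemma iso_inv_congr {k m : SimplexCategory} {θ θ' : k ⟶ m} (w : θ = θ') :
    (A.iso θ).inv = (A.iso θ').inv ≫ eqToHom (by rw [w]) := by
  subst w; simp

lemma iso_id_inv (k : SimplexCategory) :
    (A.iso (𝟙 k)).inv = eqToHom (pbX_id_obj F X k (A.obj k)).symm := by
  rw [show A.iso (𝟙 k) = eqToIso (pbX_id_obj F X k (A.obj k)) from Iso.ext (A.iso_id k)]; rfl

lemma map_iso_hom {k m l : SimplexCategory} (θ : k ⟶ m) (θ' : m ⟶ l) :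
    (pull F X θ').map (A.iso θ).hom =
      eqToHom (pbX_comp_obj F X θ θ' (A.obj k)).symm ≫ (A.iso (θ ≫ θ')).hom ≫
        (A.iso θ').inv := by
  simp [A.iso_comp θ θ']

lemma map_iso_inv {k m l : SimplexCategory} (θ : k ⟶ m) (θ' : m ⟶ l) :
    (pull F X θ').map (A.iso θ).inv =
      (A.iso θ').hom ≫ (A.iso (θ ≫ θ')).inv ≫ eqToHom (pbX_comp_obj F X θ θ' (A.obj k)) := by
  rw [← cancel_epi ((pull F X θ').map (A.iso θ).hom), ← Functor.map_comp, map_iso_hom]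
  simp

def φ : (pull F X (δ 0)).obj (A.obj ⦋0⦌) ≅ (pull F X (δ 1)).obj (A.obj ⦋0⦌) :=
  A.iso (δ 0) ≪≫ (A.iso (δ 1)).symm

lemma map_φ_hom {m : SimplexCategory} (e : ⦋1⦌ ⟶ m) :
    (pull F X e).map A.φ.hom =
      eqToHom (pbX_comp_obj F X _ e _).symm ≫ (A.iso (δ 0 ≫ e)).hom ≫
        (A.iso (δ 1 ≫ e)).inv ≫ eqToHom (pbX_comp_obj F X _ e _) := by
  rw [φ, Iso.trans_hom, Iso.symm_hom, Functor.map_comp, map_iso_hom, map_iso_inv]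
  simp

lemma φ_cocycle : (pull F X (δ (1 : Fin 3))).map A.φ.hom =
    eqToHom (pull_obj_pull_obj_eq F X (Hom.ext_zero_left _ _) _) ≫
      (pull F X (δ (0 : Fin 3))).map A.φ.hom ≫
      eqToHom (pull_obj_pull_obj_eq F X (Hom.ext_zero_left _ _) _) ≫
      (pull F X (δ (2 : Fin 3))).map A.φ.hom ≫
      eqToHom (pull_obj_pull_obj_eq F X (Hom.ext_zero_left _ _) _) := by
  rw [map_φ_hom, map_φ_hom, map_φ_hom,
    A.iso_hom_congr (show δ 0 ≫ δ 0 = δ 0 ≫ δ (1 : Fin 3) from Hom.ext_zero_left _ _),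
    A.iso_inv_congr (show δ 1 ≫ δ 0 = δ 0 ≫ δ (2 : Fin 3) from Hom.ext_zero_left _ _),
    A.iso_inv_congr (show δ 1 ≫ δ 2 = δ 1 ≫ δ (1 : Fin 3) from Hom.ext_zero_left _ _)]
  simp

abbrev restrict : DescentDatum F X where
  E := A.obj ⦋0⦌
  φ := A.φ
  cocycle := A.φ_cocycle

variable {A} {B : FullDescentDatum F X}

def transport {k m : SimplexCategory} (θ : k ⟶ m) (u : A.obj k ⟶ B.obj k) : A.obj m ⟶ B.obj m :=
  (A.iso θ).inv ≫ (pull F X θ).map u ≫ (B.iso θ).hom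

lemma map_comp_iso_hom {k m : SimplexCategory} (θ : k ⟶ m) (u : A.obj k ⟶ B.obj k) :
    (pull F X θ).map u ≫ (B.iso θ).hom = (A.iso θ).hom ≫ transport θ u := by
  simp [transport]

lemma transport_id {k : SimplexCategory} (u : A.obj k ⟶ B.obj k) : transport (𝟙 k) u = u := by
  simp [transport, iso_id_inv, iso_id, pull_id_map]

lemma transport_comp {k m l : SimplexCategory} (θ : k ⟶ m) (θ' : m ⟶ l)
    (u : A.obj k ⟶ B.obj k) : transport θ' (transport θ u) = transport (θ ≫ θ') u := by
  simp [transport, map_iso_hom, map_iso_inv, pull_map_map rfl]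

lemma transport_δ_zero_eq_δ_one {u : A.obj ⦋0⦌ ⟶ B.obj ⦋0⦌}
    (hu : (pull F X (δ 0)).map u ≫ B.φ.hom = A.φ.hom ≫ (pull F X (δ 1)).map u) :
    transport (δ 0) u = transport (δ 1) u := by
  rw [transport, Iso.inv_comp_eq, ← cancel_mono (B.iso (δ 1)).inv]
  simpa [transport, φ] using hu

lemma transport_vertex_eq {u : A.obj ⦋0⦌ ⟶ B.obj ⦋0⦌}
    (hu : transport (δ 0) u = transport (δ 1) u) {m : SimplexCategory} (v w : ⦋0⦌ ⟶ m) :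
    transport v u = transport w u := by
  have along_edge (e : ⦋1⦌ ⟶ m) : transport (δ 0 ≫ e) u = transport (δ 1 ≫ e) u := by
    rw [← transport_comp, hu, transport_comp]
  have eq_at_zero (v : ⦋0⦌ ⟶ m) : transport v u = transport (const ⦋0⦌ m 0) u := by
    rw [eq_const_of_zero v, ← δ_zero_comp_edge 0 _ (Fin.zero_le _), along_edge,
      δ_one_comp_edge]
  rw [eq_at_zero v, eq_at_zero w]

end FullDescentDatum

namespace FullHom

open FullDescentDatum SimplexCategory

variable {F X} {A B : FullDescentDatum F X}

lemma app_eq_transport (f : FullHom F X A B) {k m : SimplexCategory} (θ : k ⟶ m) :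
    f.app m = transport θ (f.app k) := by
  simp [transport, f.compat]

def restrict (f : FullHom F X A B) : DescHom F X A.restrict B.restrict where
  g := f.app ⦋0⦌
  compat := by
    change (pull F X _).map _ ≫ (B.iso _).hom ≫ (B.iso _).inv =
      ((A.iso _).hom ≫ (A.iso _).inv) ≫ (pull F X _).map _
    rw [reassoc_of% map_comp_iso_hom, ← f.app_eq_transport, f.app_eq_transport (δ 1)]
    simp [transport]

def ofLevelZero (u : A.obj ⦋0⦌ ⟶ B.obj ⦋0⦌) (hu : transport (δ 0) u = transport (δ 1) u) :
    FullHom F X A B where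
  app k := transport (const ⦋0⦌ k 0) u
  compat θ := by rw [map_comp_iso_hom, transport_comp, transport_vertex_eq hu]

lemma ofLevelZero_app_zero (u : A.obj ⦋0⦌ ⟶ B.obj ⦋0⦌)
    (hu : transport (δ 0) u = transport (δ 1) u) : (ofLevelZero u hu).app ⦋0⦌ = u := by
  simp only [ofLevelZero, const_eq_id, transport_id]

end FullHom

def restriction : FullDescentDatum F X ⥤ DescentDatum F X where
  obj A := A.restrict
  map f := f.restrict
  map_id _ := DescHom.ext' F X _ _ rfl
  map_comp _ _ := DescHom.ext' F X _ _ rfl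

instance : (restriction F X).Faithful where
  map_injective {_ _} f f' h := by
    have h₀ : f.app ⦋0⦌ = f'.app ⦋0⦌ := congrArg DescHom.g h
    refine FullHom.ext' F X _ _ (funext fun k => ?_)
    rw [f.app_eq_transport (SimplexCategory.const ⦋0⦌ k 0),
      f'.app_eq_transport (SimplexCategory.const ⦋0⦌ k 0), h₀]

instance : (restriction F X).Full where
  map_surjective g :=
    have hg := FullDescentDatum.transport_δ_zero_eq_δ_one g.compat
    ⟨FullHom.ofLevelZero g.g hg, DescHom.ext' F X _ _ (FullHom.ofLevelZero_app_zero g.g hg)⟩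

namespace DescentDatum

open SimplexCategory

variable {F X} (P : DescentDatum F X)

/-- `P.φ`, with source and target written as pullbacks along simplicial operators rather than
along `X.δ`, so that it matches the lemmas about `pull`. -/
def gluing : (pull F X (δ 0)).obj P.E ≅ (pull F X (δ 1)).obj P.E := P.φ

lemma gluing_cocycle : (pull F X (δ (1 : Fin 3))).map P.gluing.hom =
    eqToHom (pull_obj_pull_obj_eq F X (Hom.ext_zero_left _ _) _) ≫
      (pull F X (δ (0 : Fin 3))).map P.gluing.hom ≫
      eqToHom (pull_obj_pull_obj_eq F X (Hom.ext_zero_left _ _) _) ≫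
      (pull F X (δ (2 : Fin 3))).map P.gluing.hom ≫
      eqToHom (pull_obj_pull_obj_eq F X (Hom.ext_zero_left _ _) _) :=
  P.cocycle

lemma map_gluing_hom_σ :
    (pull F X (σ 0)).map P.gluing.hom =
      eqToHom (pull_obj_pull_obj_eq F X (Hom.ext_zero_left _ _) _) := by
  have hc := congrArg (pull F X (const ⦋2⦌ ⦋0⦌ 0)).map P.gluing_cocycle
  simp only [Functor.map_comp, eqToHom_map] at hc
  rw [pull_map_map (Hom.ext_one_left _ (σ 0)), pull_map_map (Hom.ext_one_left _ (σ 0)),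
    pull_map_map (Hom.ext_one_left _ (σ 0))] at hc
  simp only [eqToHom_comp_iff, comp_eqToHom_iff, Category.assoc, eqToHom_trans,
    eqToHom_trans_assoc] at hc
  exact eq_eqToHom_of_eq_comp_self _ _ _ hc

def transition {m : SimplexCategory} {i j : Fin (m.len + 1)} (h : i ≤ j) :
    (pull F X (const ⦋0⦌ m j)).obj P.E ≅ (pull F X (const ⦋0⦌ m i)).obj P.E :=
  eqToIso (by rw [← δ_zero_comp_edge i j h, pbX_comp_obj]) ≪≫
    (pull F X (edge i j h)).mapIso P.gluing ≪≫
    eqToIso (by rw [← δ_one_comp_edge i j h, pbX_comp_obj])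

lemma transition_congr {m : SimplexCategory} {i j i' j' : Fin (m.len + 1)} (h : i ≤ j)
    (h' : i' ≤ j') (hi : i = i') (hj : j = j') :
    P.transition h = eqToIso (by rw [hj]) ≪≫ P.transition h' ≪≫ eqToIso (by rw [hi]) := by
  subst hi hj
  simp

lemma transition_self {m : SimplexCategory} (i : Fin (m.len + 1)) :
    P.transition (le_refl i) = Iso.refl _ := by
  ext
  simp only [transition, Iso.trans_hom, eqToIso.hom, Functor.mapIso_hom]
  rw [pull_map_congr (edge_self i), pull_comp_map, map_gluing_hom_σ]
  simp [eqToHom_map]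

lemma transition_trans {m : SimplexCategory} {i j k : Fin (m.len + 1)} (hij : i ≤ j)
    (hjk : j ≤ k) :
    (P.transition hjk).hom ≫ (P.transition hij).hom = (P.transition (hij.trans hjk)).hom := by
  have hc := congrArg (pull F X (triangle i j k hij hjk)).map P.gluing_cocycle
  simp only [Functor.map_comp, eqToHom_map] at hc
  rw [pull_map_map (δ_one_comp_triangle i j k hij hjk),
    pull_map_map (δ_zero_comp_triangle i j k hij hjk),
    pull_map_map (δ_two_comp_triangle i j k hij hjk), eqToHom_comp_iff, comp_eqToHom_iff] at hc
  simp [transition, hc]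

lemma map_transition_hom {m l : SimplexCategory} {i j : Fin (m.len + 1)} (h : i ≤ j)
    (θ : m ⟶ l) :
    (pull F X θ).map (P.transition h).hom =
      eqToHom (by rw [← pbX_comp_obj, const_comp]) ≫
        (P.transition (θ.toOrderHom.monotone h)).hom ≫
          eqToHom (by rw [← pbX_comp_obj, const_comp]) := by
  simp only [transition, Iso.trans_hom, eqToIso.hom, Functor.mapIso_hom, Functor.map_comp,
    eqToHom_map, pull_map_map (edge_comp i j h θ)]
  simp

lemma transition_zero_one : (P.transition (zero_le_one : (0 : Fin 2) ≤ 1)).hom =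
    eqToHom (congrArg (fun θ => (pull F X θ).obj P.E) (Hom.ext_zero_left _ _)) ≫ P.gluing.hom ≫
      eqToHom (congrArg (fun θ => (pull F X θ).obj P.E) (Hom.ext_zero_left _ _)) := by
  simp only [transition, Iso.trans_hom, eqToIso.hom, Functor.mapIso_hom]
  rw [pull_map_congr edge_zero_one, pull_id_map]
  simp

abbrev toFull : FullDescentDatum F X where
  obj k := (pull F X (const ⦋0⦌ k 0)).obj P.E
  iso θ := eqToIso (by rw [← pbX_comp_obj, const_comp]) ≪≫ P.transition (Fin.zero_le _)
  iso_id k := by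
    rw [P.transition_congr _ (le_refl 0) rfl (by simp), transition_self]
    simp only [Iso.trans_hom, eqToIso.hom, Iso.refl_hom, Category.id_comp]
    rw [eqToHom_trans_assoc, eqToHom_trans]
  iso_comp θ θ' := by
    simp only [Iso.trans_hom, eqToIso.hom, Functor.map_comp, eqToHom_map, Category.assoc,
      map_transition_hom, eqToHom_trans_assoc, eqToHom_refl, Category.id_comp]
    rw [P.transition_trans]
    rfl

variable {P} in
def isoMk {Q : DescentDatum F X} (e : P.E ≅ Q.E)
    (he : (pull F X (δ 0)).map e.hom ≫ Q.gluing.hom = P.gluing.hom ≫ (pull F X (δ 1)).map e.hom) :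
    P ≅ Q where
  hom := ⟨e.hom, he⟩
  inv := ⟨e.inv, by
    change (pull F X (δ 0)).map e.inv ≫ P.gluing.hom = Q.gluing.hom ≫ (pull F X (δ 1)).map e.inv
    rw [← cancel_mono ((pull F X (δ 1)).map e.hom)]
    simp [← he]⟩
  hom_inv_id := DescHom.ext' F X _ _ e.hom_inv_id
  inv_hom_id := DescHom.ext' F X _ _ e.inv_hom_id

def restrictToFullIso : P.toFull.restrict ≅ P :=
  isoMk (eqToIso (pull_const_zero_obj F X P.E)) (by
    change _ = P.toFull.φ.hom ≫ _
    simp only [FullDescentDatum.φ]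
    rw [P.transition_congr _ zero_le_one rfl (by simp [δ_zero_eq_const]),
      P.transition_congr (Fin.zero_le (Hom.toOrderHom (δ (1 : Fin 2)) 0)) (le_refl 0) rfl
        (by simp [δ_one_eq_const]),
      transition_self]
    simp [transition_zero_one, eqToHom_map])

end DescentDatum

instance : (restriction F X).EssSurj where
  mem_essImage P := ⟨P.toFull, ⟨P.restrictToFullIso⟩⟩

/-- The restriction functor, sending a full descent datum `(E_k, iso)` on `X` to the
truncated descent datum `(E₀, φ)` with `φ : ∂₀*E₀ ≅ ∂₁*E₀` induced by the isomorphisms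
along the two face maps `[0] ⟶ [1]`, is an equivalence between the category of full
descent data on `X` and the category of descent data on the 2-truncation of `X`. -/
theorem stmt_5 :
    ∃ R : FullDescentDatum F X ⥤ DescentDatum F X,
      (∀ A : FullDescentDatum F X, (R.obj A).E = A.obj (SimplexCategory.mk 0)) ∧
      (∀ A : FullDescentDatum F X,
        HEq (R.obj A).φ
          (A.iso (SimplexCategory.δ (0 : Fin 2)) ≪≫
            (A.iso (SimplexCategory.δ (1 : Fin 2))).symm)) ∧
      (∀ (A B : FullDescentDatum F X) (f : A ⟶ B),
        HEq (DescHom.g (R.map f)) (FullHom.app f (SimplexCategory.mk 0))) ∧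
      R.IsEquivalence :=
  ⟨restriction F X, fun _ => rfl, fun _ => HEq.rfl, fun _ _ _ => HEq.rfl, {}⟩

end Stmt5
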